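/- Let (V1,…,Vn) be a U_n-twisted isometry on H, A ⊆ {1,…,n}, and j ∉ A. Then the orthogonal complement of V_j W_A inside W_A equals W_{A ∪ {j}}; that is, W_A ⊖ V_j W_A = W_A ∩ ker V_j*. -/

import Mathlib

/-!
The twisted relation `V_i⋆ V_j = U_ij⋆ V_j V_i⋆` between isometries forces the twisted
commutation `V_j V_i = U_ij⋆ V_i V_j`: both sides are isometries `T`, `S` with `S⋆ T = 1`,
so `(T - S)⋆ (T - S) = 0`. Taking adjoints, `V_i⋆ V_j⋆ = U_ij V_j⋆ V_i⋆`, so every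
`ker V_i⋆` with `i ≠ j`, hence `W_A`, is invariant under `V_j⋆`. For a `V_j⋆`-invariant `W`, a vector
`x ∈ W` is orthogonal to `V_j W` iff `V_j⋆ x ∈ W ∩ Wᗮ = 0`.
-/

open ContinuousLinearMap

section CStarRing

variable {E : Type*} [NormedRing E] [StarRing E] [CStarRing E]

theorem eq_of_star_mul_self_eq_one_of_star_mul_eq_one {S T : E} (hS : star S * S = 1)
    (hT : star T * T = 1) (hST : star S * T = 1) : S = T := by
  have hTS : star T * S = 1 := by simpa using congrArg star hST
  have : star (T - S) * (T - S) = 0 := by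
    simp only [star_sub, sub_mul, mul_sub, hS, hT, hST, hTS, sub_self]
  exact (sub_eq_zero.mp (CStarRing.star_mul_self_eq_zero_iff _ |>.mp this)).symm

theorem mul_eq_star_mul_mul_of_star_mul_eq {a b u : E} (ha : star a * a = 1)
    (hb : star b * b = 1) (hu : u ∈ unitary E) (hau : Commute a u) (hbu : Commute b u)
    (htw : star a * b = star u * (b * star a)) :
    b * a = star u * (a * b) := by
  have hbu' : star b * star u = star u * star b := by simpa using (congrArg star hbu).symm
  have hS : star (star u * (a * b)) * (star u * (a * b)) = 1 := by
    simp only [star_mul, star_star, mul_assoc]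
    rw [← mul_assoc u, Unitary.mul_star_self_of_mem hu, one_mul, ← mul_assoc (star a), ha,
      one_mul, hb]
  have hT : star (b * a) * (b * a) = 1 := by
    rw [star_mul, mul_assoc, ← mul_assoc (star b), hb, one_mul, ha]
  have hST : star (star u * (a * b)) * (b * a) = 1 :=
    calc star (star u * (a * b)) * (b * a) = star b * (star a * (u * (b * a))) := by
          simp only [star_mul, star_star, mul_assoc]
      _ = star b * ((star a * b) * a * u) := by
          rw [(hbu.mul_left hau).eq.symm]; simp only [mul_assoc]
      _ = star b * star u * b * (star a * a) * u := by rw [htw]; simp only [mul_assoc]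
      _ = star u * (star b * b) * u := by rw [hbu', ha]; simp only [mul_assoc, mul_one]
      _ = 1 := by rw [hb, mul_one, Unitary.star_mul_self_of_mem hu]
  exact (eq_of_star_mul_self_eq_one_of_star_mul_eq_one hS hT hST).symm

end CStarRing

theorem star_mul_star_eq_of_mul_eq {M : Type*} [Monoid M] [StarMul M] {a b u : M}
    (hu : u * star u = 1) (hab : Commute u (b * a)) (h : b * a = star u * (a * b)) :
    star a * star b = u * (star b * star a) := by
  have hab' : a * b = b * a * u := by rw [← hab.eq, h, ← mul_assoc, hu, one_mul]
  have hstar : star b * star a = star u * (star a * star b) := by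
    rw [← star_mul, hab', star_mul, star_mul]
  rw [hstar, ← mul_assoc, hu, one_mul]

namespace Submodule

variable {𝕜 E : Type*} [RCLike 𝕜] [NormedAddCommGroup E] [InnerProductSpace 𝕜 E]
  [CompleteSpace E]

theorem orthogonal_map_eq_comap_adjoint {F : Type*} [NormedAddCommGroup F]
    [InnerProductSpace 𝕜 F] [CompleteSpace F] (T : E →L[𝕜] F) (W : Submodule 𝕜 E) :
    (W.map (T : E →ₗ[𝕜] F))ᗮ = Wᗮ.comap (adjoint T : F →ₗ[𝕜] E) := by
  ext x
  simp [mem_orthogonal, adjoint_inner_right]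

theorem inf_orthogonal_map_eq_inf_ker_adjoint (T : E →L[𝕜] E) (W : Submodule 𝕜 E)
    (hW : ∀ x ∈ W, adjoint T x ∈ W) :
    W ⊓ (W.map (T : E →ₗ[𝕜] E))ᗮ = W ⊓ (adjoint T : E →ₗ[𝕜] E).ker := by
  rw [orthogonal_map_eq_comap_adjoint]
  ext x
  simp only [mem_inf, mem_comap, LinearMap.mem_ker, ContinuousLinearMap.coe_coe]
  refine and_congr_right fun hx => ⟨fun hxo => ?_, fun hx0 => hx0 ▸ zero_mem _⟩
  exact disjoint_def.mp W.orthogonal_disjoint _ (hW x hx) hxo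

end Submodule

theorem stmt_5_general {H : Type*} [NormedAddCommGroup H] [InnerProductSpace ℂ H] [CompleteSpace H]
    {n : ℕ} (U : Fin n → Fin n → (H →L[ℂ] H)) (V : Fin n → (H →L[ℂ] H))
    (hUu : ∀ i j, i ≠ j → U i j * adjoint (U i j) = 1 ∧ adjoint (U i j) * U i j = 1)
    (hViso : ∀ i, adjoint (V i) * V i = 1)
    (hVU : ∀ p s t, s ≠ t → V p * U s t = U s t * V p)
    (htw : ∀ i j, i ≠ j → adjoint (V i) * V j = adjoint (U i j) * (V j * adjoint (V i)))
    (A : Set (Fin n)) (j : Fin n) (hj : j ∉ A)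
    (W : Submodule ℂ H) (hW : W = ⨅ i ∈ A, LinearMap.ker (adjoint (V i) : H →ₗ[ℂ] H)) :
    W ⊓ (Submodule.map (V j).toLinearMap W)ᗮ = W ⊓ LinearMap.ker (adjoint (V j) : H →ₗ[ℂ] H) := by
  have hstar : ∀ i, i ≠ j →
      adjoint (V i) * adjoint (V j) = U i j * (adjoint (V j) * adjoint (V i)) := by
    intro i hij
    have hu : U i j ∈ unitary (H →L[ℂ] H) := ⟨(hUu i j hij).2, (hUu i j hij).1⟩
    have hVi : Commute (V i) (U i j) := hVU i i j hij
    have hVj : Commute (V j) (U i j) := hVU j i j hij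
    exact star_mul_star_eq_of_mul_eq (Unitary.mul_star_self_of_mem hu) (hVj.mul_left hVi).symm
      (mul_eq_star_mul_mul_of_star_mul_eq (hViso i) (hViso j) hu hVi hVj (htw i j hij))
  refine Submodule.inf_orthogonal_map_eq_inf_ker_adjoint (V j) W fun x hx => ?_
  subst hW
  simp only [Submodule.mem_iInf, LinearMap.mem_ker, ContinuousLinearMap.coe_coe] at hx ⊢
  intro i hi
  calc adjoint (V i) (adjoint (V j) x)
      = (U i j * (adjoint (V j) * adjoint (V i))) x := by
        rw [← hstar i (ne_of_mem_of_not_mem hi hj)]; rfl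
    _ = 0 := by simp [hx i hi]

theorem stmt_5 {H : Type*} [NormedAddCommGroup H] [InnerProductSpace ℂ H] [CompleteSpace H]
    {n : ℕ} (U : Fin n → Fin n → (H →L[ℂ] H)) (V : Fin n → (H →L[ℂ] H))
    (hUu : ∀ i j, i ≠ j → U i j * adjoint (U i j) = 1 ∧ adjoint (U i j) * U i j = 1)
    (hUsym : ∀ i j, i ≠ j → U j i = adjoint (U i j))
    (hUcomm : ∀ i j s t, i ≠ j → s ≠ t → U i j * U s t = U s t * U i j)
    (hViso : ∀ i, adjoint (V i) * V i = 1)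
    (hVU : ∀ p s t, s ≠ t → V p * U s t = U s t * V p)
    (htw : ∀ i j, i ≠ j → adjoint (V i) * V j = adjoint (U i j) * (V j * adjoint (V i)))
    (A : Set (Fin n)) (j : Fin n) (hj : j ∉ A)
    (W : Submodule ℂ H) (hW : W = ⨅ i ∈ A, LinearMap.ker (adjoint (V i) : H →ₗ[ℂ] H)) :
    W ⊓ (Submodule.map (V j).toLinearMap W)ᗮ = W ⊓ LinearMap.ker (adjoint (V j) : H →ₗ[ℂ] H) :=
  stmt_5_general U V hUu hViso hVU htw A j hj W hW
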